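/- Let 1 < p < k̄ and let f'_p be the extended distribution rule (equal to f*_p on [1,p] and defined by the recursion j·f'_p(j) - f'_p(j+1) = χ(f'_p,k̄) for p ≤ j ≤ k̄-1 with (k̄-1)·f'_p(k̄) = χ(f'_p,k̄)). Then j·f'_p(j) ≤ 1 for all j ∈ {1,...,k̄}. -/

import Mathlib

/-! With `q = p - 1` and `T(j) = 1/(q·q!) + ∑_{i=j}^{q} 1/i!`, one has `j·f*_p(j) = j!·T(j) / T(1)`.
The telescoping estimate `1/(j+1)! + 1/((j+1)·(j+1)!) ≤ 1/(j·j!)` gives `T(j+1) ≤ 1/(j·j!)`, which is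
exactly what makes `j ↦ j!·T(j)` non-increasing; so `j·f*_p(j) ≤ 1` on `[1, p]`.

Beyond `p`, downward induction from `(k̄-1)·f(k̄) = χ ≥ 0` through `j·f(j) = χ + f(j+1)` shows
`f(j) ≥ 0` and `(j-1)·f(j) ≤ χ`. The latter, at `j+1`, is equivalent to `(j+1)·f(j+1) ≤ j·f(j)`,
so `j·f(j) ≤ p·f(p) = p·f*_p(p) ≤ 1` on `[p, k̄]`. -/

/-- The optimal distribution rule `f*_k(j)` for covering games of cardinality `k`. -/
noncomputable def fstar (k j : ℕ) : ℝ :=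
  (Nat.factorial (j - 1) : ℝ) *
    (1 / (((k - 1) * Nat.factorial (k - 1) : ℕ) : ℝ) +
      ∑ i ∈ Finset.Icc j (k - 1), (1 : ℝ) / (Nat.factorial i : ℝ)) /
  (1 / (((k - 1) * Nat.factorial (k - 1) : ℕ) : ℝ) +
      ∑ i ∈ Finset.Icc 1 (k - 1), (1 : ℝ) / (Nat.factorial i : ℝ))

/-- `χ(f'_p, k̄)` in closed form. -/
noncomputable def chiRisky (p k : ℕ) : ℝ :=
  ((((k - 1) * Nat.factorial (k - 1) : ℕ) : ℝ) /
      ((k : ℝ) + ((k - 1 : ℕ) : ℝ) *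
        ∑ h ∈ Finset.Icc 1 (k - 1 - p),
          (Nat.factorial (k - 1) : ℝ) / (Nat.factorial (k - h - 1) : ℝ))) *
    (fstar p p / (Nat.factorial (p - 1) : ℝ))

open Finset Nat

noncomputable def factorialTail (q j : ℕ) : ℝ :=
  1 / ((q * q ! : ℕ) : ℝ) + ∑ i ∈ Icc j q, 1 / (i ! : ℝ)

lemma fstar_eq_factorialTail (p j : ℕ) :
    fstar p j = (j - 1)! * factorialTail (p - 1) j / factorialTail (p - 1) 1 := rfl

lemma factorialTail_nonneg (q j : ℕ) : 0 ≤ factorialTail q j := by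
  unfold factorialTail; positivity

lemma factorialTail_succ_self (q : ℕ) : factorialTail q (q + 1) = 1 / ((q * q ! : ℕ) : ℝ) := by
  simp [factorialTail]

lemma factorialTail_eq_add {q j : ℕ} (hj : j ≤ q) :
    factorialTail q j = 1 / (j ! : ℝ) + factorialTail q (j + 1) := by
  rw [factorialTail, factorialTail, ← insert_Icc_add_one_left_eq_Icc hj, sum_insert (by simp)]
  ring

lemma one_div_factorial_add_le {j : ℕ} (hj : 1 ≤ j) :
    1 / ((j + 1)! : ℝ) + 1 / (((j + 1) * (j + 1)! : ℕ) : ℝ) ≤ 1 / ((j * j ! : ℕ) : ℝ) := by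
  have hj' : (1 : ℝ) ≤ j := by exact_mod_cast hj
  push_cast [factorial_succ]
  rw [div_add_div _ _ (by positivity) (by positivity), div_le_div_iff₀ (by positivity) (by positivity)]
  have hF : (0 : ℝ) < j ! := by positivity
  nlinarith [mul_pos (mul_pos hF hF) (by positivity : (0 : ℝ) < j + 1)]

lemma factorialTail_succ_le {q j : ℕ} (hj : 1 ≤ j) (hjq : j ≤ q) :
    factorialTail q (j + 1) ≤ 1 / ((j * j ! : ℕ) : ℝ) := by
  induction hjq using Nat.decreasingInduction with
  | self => exact (factorialTail_succ_self q).le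
  | of_succ j hjq ih =>
    calc factorialTail q (j + 1) = 1 / ((j + 1)! : ℝ) + factorialTail q (j + 1 + 1) :=
          factorialTail_eq_add hjq
      _ ≤ 1 / ((j + 1)! : ℝ) + 1 / (((j + 1) * (j + 1)! : ℕ) : ℝ) := by gcongr; exact ih (by omega)
      _ ≤ 1 / ((j * j ! : ℕ) : ℝ) := one_div_factorial_add_le hj

lemma antitoneOn_factorial_mul_factorialTail (q : ℕ) :
    AntitoneOn (fun j => (j ! : ℝ) * factorialTail q j) (Set.Icc 1 (q + 1)) := by
  refine antitoneOn_of_succ_le Set.ordConnected_Icc fun j _ hj hj' => ?_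
  simp only [Order.succ_eq_add_one, Set.mem_Icc] at hj hj' ⊢
  have hpos : (0 : ℝ) < j * j ! := by
    have : (0 : ℝ) < j := by exact_mod_cast hj.1
    positivity
  have hbound := factorialTail_succ_le hj.1 (by omega : j ≤ q)
  rw [Nat.cast_mul, le_div_iff₀ hpos] at hbound
  calc ((j + 1)! : ℝ) * factorialTail q (j + 1)
      = j * j ! * factorialTail q (j + 1) + j ! * factorialTail q (j + 1) := by
        push_cast [factorial_succ]; ring
    _ ≤ 1 + j ! * factorialTail q (j + 1) := by gcongr; linarith
    _ = j ! * factorialTail q j := by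
        rw [factorialTail_eq_add (by omega : j ≤ q), mul_add, mul_one_div_cancel (by positivity)]

lemma mul_fstar_le_one {p j : ℕ} (hj : 1 ≤ j) (hjp : j ≤ p) : (j : ℝ) * fstar p j ≤ 1 := by
  have hfac : (j : ℝ) * (j - 1)! = j ! := by exact_mod_cast mul_factorial_pred (by omega)
  rw [fstar_eq_factorialTail, ← mul_div_assoc, ← mul_assoc, hfac]
  refine div_le_one_of_le₀ ?_ (factorialTail_nonneg _ _)
  simpa using antitoneOn_factorial_mul_factorialTail (p - 1)
    (Set.mem_Icc.2 ⟨le_rfl, by omega⟩) (Set.mem_Icc.2 ⟨hj, by omega⟩) hj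

lemma chiRisky_nonneg (p k : ℕ) : 0 ≤ chiRisky p k := by
  unfold chiRisky fstar; positivity

section Recursion

variable {f : ℕ → ℝ} {c : ℝ} {m n : ℕ}

lemma nonneg_and_sub_one_mul_le_of_recursion (hn : 1 < n) (hc : 0 ≤ c)
    (hrec : ∀ j, m ≤ j → j < n → (j : ℝ) * f j - f (j + 1) = c)
    (htail : ((n : ℝ) - 1) * f n = c) {j : ℕ} (hmj : m < j) (hjn : j ≤ n) :
    0 ≤ f j ∧ ((j : ℝ) - 1) * f j ≤ c := by
  revert hmj
  induction hjn using Nat.decreasingInduction with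
  | self =>
    intro _
    have hn : (1 : ℝ) < n := by exact_mod_cast hn
    exact ⟨by nlinarith, htail.le⟩
  | of_succ j hjn ih =>
    intro hmj
    obtain ⟨hf, hle⟩ := ih (by omega)
    have hstep := hrec j (by omega) hjn
    have hj : (1 : ℝ) ≤ j := by exact_mod_cast (by omega : 1 ≤ j)
    push_cast at hle
    constructor <;> nlinarith

lemma antitoneOn_mul_of_recursion (hn : 1 < n) (hc : 0 ≤ c)
    (hrec : ∀ j, m ≤ j → j < n → (j : ℝ) * f j - f (j + 1) = c)
    (htail : ((n : ℝ) - 1) * f n = c) :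
    AntitoneOn (fun j : ℕ => (j : ℝ) * f j) (Set.Icc m n) := by
  refine antitoneOn_of_succ_le Set.ordConnected_Icc fun j _ hj hj' => ?_
  simp only [Order.succ_eq_add_one, Set.mem_Icc] at hj hj' ⊢
  have hstep := hrec j hj.1 (by omega)
  have hinv := (nonneg_and_sub_one_mul_le_of_recursion hn hc hrec htail (by omega) hj'.2).2
  push_cast at hinv ⊢
  linarith

end Recursion

theorem stmt_15 (p k : ℕ) (hp : 1 < p) (hpk : p < k) (f : ℕ → ℝ)
    (hhead : ∀ j ∈ Finset.Icc 1 p, f j = fstar p j)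
    (hrec : ∀ j : ℕ, p ≤ j → j ≤ k - 1 → (j : ℝ) * f j - f (j + 1) = chiRisky p k)
    (htail : ((k - 1 : ℕ) : ℝ) * f k = chiRisky p k) :
    ∀ j ∈ Finset.Icc 1 k, (j : ℝ) * f j ≤ 1 := by
  intro j hj
  obtain ⟨hj1, hjk⟩ := mem_Icc.1 hj
  rcases le_or_gt j p with hjp | hpj
  · rw [hhead j (mem_Icc.2 ⟨hj1, hjp⟩)]
    exact mul_fstar_le_one hj1 hjp
  have hanti := antitoneOn_mul_of_recursion (m := p) (n := k) (by omega) (chiRisky_nonneg p k)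
    (fun i hpi hik => hrec i hpi (by omega)) (by rwa [Nat.cast_pred (by omega)] at htail)
  calc (j : ℝ) * f j ≤ p * f p := hanti ⟨le_rfl, hpk.le⟩ ⟨hpj.le, hjk⟩ hpj.le
    _ = p * fstar p p := by rw [hhead p (mem_Icc.2 ⟨hp.le, le_rfl⟩)]
    _ ≤ 1 := mul_fstar_le_one hp.le le_rfl
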